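/- Let F be a finite field of characteristic 5 and G = C_3 × D_10. Then J(FG)⁵ = 0. -/

import Mathlib

/-!
The rotation `g = (1, r)` generates the normal Sylow `5`-subgroup `P ≅ C₅` of `G`, which is the
kernel of `id × sign : G → C₃ × C₂`. As `6` is invertible in `F`, `F[C₃ × C₂]` is semisimple by
Maschke's theorem, so `J(FG)` lies in the kernel of `FG → F[C₃ × C₂]`, which is the left ideal
generated by `s = g - 1`. Since `P` is normal this ideal is two-sided, hence a product of five
elements of `J(FG)` lies in `FG · s⁵`, and `s⁵ = g⁵ - 1 = 0` in characteristic `5`.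
-/

open MonoidAlgebra

namespace DihedralGroup

variable {n : ℕ}

def sign : DihedralGroup n →* ℤˣ where
  toFun
    | r _ => 1
    | sr _ => -1
  map_one' := rfl
  map_mul' := by rintro (i | i) (j | j) <;> simp [r_mul_r, r_mul_sr, sr_mul_r, sr_mul_sr]

lemma sign_surjective : Function.Surjective (sign (n := n)) := by
  intro u
  rcases Int.units_eq_one_or u with rfl | rfl
  exacts [⟨r 0, rfl⟩, ⟨sr 0, rfl⟩]

lemma exists_eq_r_one_pow_of_sign_eq_one [NeZero n] {x : DihedralGroup n} (hx : sign x = 1) :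
    ∃ k : ℕ, x = r 1 ^ k := by
  rcases x with i | i
  · exact ⟨i.val, by rw [r_one_pow, ZMod.natCast_zmod_val]⟩
  · exact absurd hx (by decide : (-1 : ℤˣ) ≠ 1)

end DihedralGroup

lemma exists_eq_pow_of_prodMap_sign_eq_one {C : Type*} [Group C] {n : ℕ} [NeZero n]
    {h : C × DihedralGroup n} (hh : (MonoidHom.id C).prodMap DihedralGroup.sign h = 1) :
    ∃ k : ℕ, h = (1, DihedralGroup.r 1) ^ k := by
  obtain ⟨k, hk⟩ := DihedralGroup.exists_eq_r_one_pow_of_sign_eq_one (congrArg Prod.snd hh)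
  exact ⟨k, Prod.ext (by simpa using congrArg Prod.fst hh) (by simpa using hk)⟩

lemma Ring.jacobson_le_ker_of_surjective {R S : Type*} [Ring R] [Ring S] [IsSemisimpleRing S]
    (f : R →+* S) (hf : Function.Surjective f) : Ring.jacobson R ≤ RingHom.ker f := by
  have : RingHomSurjective f := ⟨hf⟩
  refine (Ring.le_comap_jacobson f).trans ?_
  rw [IsSemisimpleRing.jacobson_eq_bot, ← RingHom.ker_eq_comap_bot]

section SpanPow

variable {R : Type*} [Ring R] {s : R} [(Ideal.span {s}).IsTwoSided]

lemma pow_mul_mem_span_pow (m : ℕ) (x : R) : s ^ m * x ∈ Ideal.span {s ^ m} := by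
  induction m generalizing x with
  | zero => simp
  | succ m ih =>
    obtain ⟨c, hc⟩ := Ideal.mem_span_singleton'.mp
      ((Ideal.span {s}).mul_mem_right x (Ideal.mem_span_singleton_self s))
    obtain ⟨d, hd⟩ := Ideal.mem_span_singleton'.mp (ih c)
    refine Ideal.mem_span_singleton'.mpr ⟨d, ?_⟩
    rw [pow_succ, ← mul_assoc, hd, mul_assoc, hc, mul_assoc]

lemma mul_mem_span_pow_succ {m : ℕ} {x y : R} (hx : x ∈ Ideal.span {s ^ m})
    (hy : y ∈ Ideal.span {s}) : x * y ∈ Ideal.span {s ^ (m + 1)} := by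
  obtain ⟨a, rfl⟩ := Ideal.mem_span_singleton'.mp hx
  obtain ⟨b, rfl⟩ := Ideal.mem_span_singleton'.mp hy
  obtain ⟨c, hc⟩ := Ideal.mem_span_singleton'.mp (pow_mul_mem_span_pow (s := s) m b)
  refine Ideal.mem_span_singleton'.mpr ⟨a * c, ?_⟩
  rw [pow_succ, ← mul_assoc, mul_assoc a c, hc]
  simp only [mul_assoc]

end SpanPow

namespace MonoidAlgebra

lemma mapDomain_surjective {k M N : Type*} [Semiring k] {f : M → N}
    (hf : Function.Surjective f) : Function.Surjective (mapDomain (R := k) f) := by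
  intro y
  induction y using induction_linear with
  | zero => exact ⟨0, mapDomain_zero f⟩
  | add x y hx hy =>
    obtain ⟨x', rfl⟩ := hx
    obtain ⟨y', rfl⟩ := hy
    exact ⟨x' + y', mapDomain_add f x' y'⟩
  | single m r =>
    obtain ⟨m', rfl⟩ := hf m
    exact ⟨single m' r, mapDomain_single⟩

lemma single_sub_one_pow_expChar_pow {k G : Type*} [CommRing k] [Monoid G] (p n : ℕ)
    [ExpChar k p] {g : G} (hg : g ^ p ^ n = 1) : (single g 1 - 1 : k[G]) ^ p ^ n = 0 := by
  have := expChar_of_injective_algebraMap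
    (show Function.Injective (algebraMap k k[G]) from single_right_injective) p
  rw [sub_pow_expChar_pow_of_commute _ _ (Commute.one_right _), single_pow, hg, one_pow,
    one_pow, ← one_def, sub_self]

variable {k G : Type*} [Ring k]

section Monoid

variable [Monoid G] {g : G}

lemma single_pow_sub_one_mem_span (g : G) (n : ℕ) :
    (single (g ^ n) 1 - 1 : k[G]) ∈ Ideal.span {single g 1 - 1} := by
  induction n with
  | zero => simp [one_def]
  | succ n ih =>
    have : (single (g ^ (n + 1)) 1 - 1 : k[G])
        = single (g ^ n) 1 * (single g 1 - 1) + (single (g ^ n) 1 - 1) := by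
      rw [mul_sub, single_mul_single, ← pow_succ, mul_one, mul_one]
      abel
    rw [this]
    exact add_mem (Ideal.mul_mem_left _ _ (Ideal.mem_span_singleton_self _)) ih

lemma single_mul_pow_sub_single_mem_span (h : G) (n : ℕ) (r : k) :
    single (h * g ^ n) r - single h r ∈ Ideal.span {single g 1 - 1} := by
  have : single (h * g ^ n) r - single h r = single h r * (single (g ^ n) 1 - 1) := by
    rw [mul_sub, single_mul_single, mul_one, mul_one]
  rw [this]
  exact Ideal.mul_mem_left _ _ (single_pow_sub_one_mem_span g n)

lemma isTwoSided_span_single_sub_one (hconj : ∀ h : G, ∃ n : ℕ, g * h = h * g ^ n) :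
    (Ideal.span {(single g 1 - 1 : k[G])}).IsTwoSided := by
  refine ⟨fun b ha => ?_⟩
  obtain ⟨c, rfl⟩ := Ideal.mem_span_singleton'.mp ha
  rw [mul_assoc]
  refine Ideal.mul_mem_left _ c ?_
  induction b using induction_linear with
  | zero => simp
  | add x y hx hy => rw [mul_add]; exact add_mem hx hy
  | single h r =>
    obtain ⟨n, hn⟩ := hconj h
    rw [sub_mul, single_mul_single, one_mul, one_mul, hn]
    exact single_mul_pow_sub_single_mem_span h n r

end Monoid

lemma ker_mapDomainRingHom_le_span [Group G] {Q : Type*} [Group Q] {g : G} (φ : G →* Q)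
    (hker : ∀ h, φ h = 1 → ∃ n : ℕ, h = g ^ n) :
    RingHom.ker (mapDomainRingHom k φ) ≤ Ideal.span {single g 1 - 1} := by
  let σ : Q → G := Function.invFun φ
  -- Each fibre of `φ` is a coset `h ⟨g⟩`, so `σ_* ∘ φ_*` is the identity modulo the ideal.
  have hσ (x : k[G]) : x - mapDomain σ (mapDomain φ x) ∈ Ideal.span {single g 1 - 1} := by
    induction x using induction_linear with
    | zero => simp
    | add x y hx hy =>
      rw [mapDomain_add, mapDomain_add, add_sub_add_comm]
      exact add_mem hx hy
    | single h r =>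
      obtain ⟨n, hn⟩ := hker ((σ (φ h))⁻¹ * h) (by simp [σ, Function.invFun_eq ⟨h, rfl⟩])
      rw [mapDomain_single, mapDomain_single]
      nth_rw 1 [inv_mul_eq_iff_eq_mul.mp hn]
      exact single_mul_pow_sub_single_mem_span _ n r
  intro x hx
  have hx : mapDomain φ x = 0 := hx
  simpa [hx] using hσ x

theorem jacobson_le_span_single_sub_one {k G Q : Type*} [Field k] [Group G] [Group Q]
    [Finite Q] [NeZero (Nat.card Q : k)] {g : G} (φ : G →* Q) (hφ : Function.Surjective φ)
    (hker : ∀ h, φ h = 1 → ∃ n : ℕ, h = g ^ n) :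
    Ring.jacobson k[G] ≤ Ideal.span {single g 1 - 1} :=
  (Ring.jacobson_le_ker_of_surjective _ (mapDomain_surjective hφ)).trans
    (ker_mapDomainRingHom_le_span φ hker)

end MonoidAlgebra

open MonoidAlgebra in
theorem stmt_12_general (F : Type) [Field F] (hchar : CharP F 5) :
    let G := Multiplicative (ZMod 3) × DihedralGroup 5
    ∀ a b c d e : MonoidAlgebra F G,
      a ∈ Ideal.jacobson (⊥ : Ideal (MonoidAlgebra F G)) →
      b ∈ Ideal.jacobson (⊥ : Ideal (MonoidAlgebra F G)) →
      c ∈ Ideal.jacobson (⊥ : Ideal (MonoidAlgebra F G)) →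
      d ∈ Ideal.jacobson (⊥ : Ideal (MonoidAlgebra F G)) →
      e ∈ Ideal.jacobson (⊥ : Ideal (MonoidAlgebra F G)) →
      a * b * c * d * e = 0 := by
  intro G a b c d e ha hb hc hd he
  let φ : G →* Multiplicative (ZMod 3) × ℤˣ := (MonoidHom.id _).prodMap DihedralGroup.sign
  let g : G := (1, DihedralGroup.r 1)
  have hker (h : G) (hh : φ h = 1) : ∃ n : ℕ, h = g ^ n :=
    exists_eq_pow_of_prodMap_sign_eq_one hh
  have : NeZero (Nat.card (Multiplicative (ZMod 3) × ℤˣ) : F) := ⟨by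
    rw [show Nat.card (Multiplicative (ZMod 3) × ℤˣ) = 6 by simp, Ne,
      CharP.cast_eq_zero_iff F 5]
    norm_num⟩
  have hrad : Ideal.jacobson ⊥ ≤ Ideal.span {(single g 1 - 1 : F[G])} :=
    Ideal.jacobson_bot.trans_le <| jacobson_le_span_single_sub_one φ
      (Function.surjective_id.prodMap DihedralGroup.sign_surjective) hker
  have := isTwoSided_span_single_sub_one (k := F) (g := g) fun h => by
    obtain ⟨n, hn⟩ := hker (h⁻¹ * g * h)
      (by rw [map_mul, map_mul, map_inv, show φ g = 1 from rfl, mul_one, inv_mul_cancel])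
    exact ⟨n, by rw [← hn, mul_assoc, mul_inv_cancel_left]⟩
  have h5 : a * b * c * d * e ∈ Ideal.span {(single g 1 - 1 : F[G]) ^ 5 ^ 1} :=
    mul_mem_span_pow_succ (mul_mem_span_pow_succ (mul_mem_span_pow_succ (mul_mem_span_pow_succ
      (by rw [pow_one]; exact hrad ha) (hrad hb)) (hrad hc)) (hrad hd)) (hrad he)
  have : Fact (Nat.Prime 5) := ⟨by norm_num⟩
  rwa [single_sub_one_pow_expChar_pow 5 1 (Prod.ext rfl DihedralGroup.r_one_pow_n),
    Ideal.span_singleton_eq_bot.mpr rfl, Ideal.mem_bot] at h5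

/-- For `F` a finite field of characteristic 5 and `G = C₃ × D₁₀`, the fifth power of the
Jacobson radical of `FG` is zero: any product of five elements of `J(FG)` vanishes. -/
theorem stmt_12 (F : Type) [Field F] [Fintype F] (hchar : CharP F 5) :
    let G := Multiplicative (ZMod 3) × DihedralGroup 5
    ∀ a b c d e : MonoidAlgebra F G,
      a ∈ Ideal.jacobson (⊥ : Ideal (MonoidAlgebra F G)) →
      b ∈ Ideal.jacobson (⊥ : Ideal (MonoidAlgebra F G)) →
      c ∈ Ideal.jacobson (⊥ : Ideal (MonoidAlgebra F G)) →
      d ∈ Ideal.jacobson (⊥ : Ideal (MonoidAlgebra F G)) →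
      e ∈ Ideal.jacobson (⊥ : Ideal (MonoidAlgebra F G)) →
      a * b * c * d * e = 0 :=
  stmt_12_general F hchar
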